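/- Let d ≥ 1 and M > 0. There exists a constant C > 0 depending only on d and M such that the following holds. Let u : ℝ × ℝ^d → ℝ be twice continuously differentiable with all partial derivatives (jointly in time and space) of order ≤ 2 bounded in absolute value by M. Let A ∈ ℝ^{d×d} be symmetric and β ∈ ℝ^d with all entries bounded in absolute value by M; let μ ∈ (0, M] and γ̄, c̄, ḡ, ψ̄ ∈ [−M, M]. Let z ∈ ℝ^d, let n ∈ ℝ^d be a unit vector, and let t ∈ ℝ. Assume: (PDE at (t,z)) ∂_t u(t,z) + 𝒜_{A,β}u(t,·)(z) + c̄ u(t,z) + ḡ = 0, and (sticky boundary relation at (t,z)) −μ 𝒜_{A,β}u(t,·)(z) + ∇_x u(t,z)·n + γ̄ u(t,z) = ψ̄. Then for every r ∈ (0,1], Y_k > 0 and Z_k ∈ ℝ, setting Y_{k+1} := Y_k(1 + rγ̄ + rμc̄) and Z_{k+1} := Z_k − rψ̄ Y_k + rμḡ Y_k, one has |u(t + μr, z)·Y_{k+1} + Z_{k+1} − u(t, z − rn)·Y_k − Z_k| ≤ C r² Y_k. -/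

import Mathlib

/-! Expand `u` to first order around `(t, z)`, in time with step `μr` and in space with step
`-rn`; the bound on the second derivatives makes both remainders `O(r²)`. Adding `μ` times the PDE
to the sticky boundary relation eliminates `𝒜u`, and the resulting first-order identity is exactly
what makes the first-order terms of the two expansions cancel against the increments of `Y` and
`Z`. What is left is `r (γ̄ + μc̄) (u(t + μr, z) - u(t, z))`, which is `O(r²)` by the mean value
theorem. -/

/-- The second-order differential operator
`𝒜_{A,β} v (y) = (1/2) ∑_{i,j} A i j ∂²v/∂yᵢ∂yⱼ (y) + ∑ i, β i ∂v/∂yᵢ (y)`. -/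
noncomputable def stickyGen {d : ℕ} (A : Matrix (Fin d) (Fin d) ℝ) (β : Fin d → ℝ)
    (v : (Fin d → ℝ) → ℝ) (y : Fin d → ℝ) : ℝ :=
  (1 / 2) * ∑ i, ∑ j, A i j *
      iteratedFDeriv ℝ 2 v y ![Pi.single i 1, Pi.single j 1]
    + ∑ i, β i * fderiv ℝ v y (Pi.single i 1)

open Metric

section Taylor

variable {E F : Type*} [NormedAddCommGroup E] [NormedSpace ℝ E]
  [NormedAddCommGroup F] [NormedSpace ℝ F] {f : E → F} {M : ℝ}

theorem norm_fderiv_sub_fderiv_le (hf : ContDiff ℝ 2 f)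
    (hf₂ : ∀ x, ‖iteratedFDeriv ℝ 2 f x‖ ≤ M) (x y : E) :
    ‖fderiv ℝ f y - fderiv ℝ f x‖ ≤ M * ‖y - x‖ := by
  refine convex_univ.norm_image_sub_le_of_norm_fderiv_le
    (fun z _ => ((hf.fderiv_right (m := 1) le_rfl).differentiable one_ne_zero) z)
    (fun z _ => ?_) trivial trivial
  rw [← norm_iteratedFDeriv_one, norm_iteratedFDeriv_fderiv]
  exact hf₂ z

theorem norm_image_add_sub_sub_fderiv_le (hf : ContDiff ℝ 2 f)
    (hf₂ : ∀ x, ‖iteratedFDeriv ℝ 2 f x‖ ≤ M) (x h : E) :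
    ‖f (x + h) - f x - fderiv ℝ f x h‖ ≤ M * ‖h‖ ^ 2 := by
  have hM : 0 ≤ M := (norm_nonneg _).trans (hf₂ x)
  have hxh : x + h ∈ closedBall x ‖h‖ := by simp [dist_eq_norm]
  have key := (convex_closedBall x ‖h‖).norm_image_sub_le_of_norm_fderiv_le'
    (fun y _ => (hf.differentiable two_ne_zero).differentiableAt)
    (fun y hy => (norm_fderiv_sub_fderiv_le hf hf₂ x y).trans
      (mul_le_mul_of_nonneg_left (by rwa [← dist_eq_norm]) hM))
    (mem_closedBall_self (norm_nonneg h)) hxh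
  rwa [add_sub_cancel_left, mul_assoc, ← sq] at key

end Taylor

section Product

variable {E F : Type*} [NormedAddCommGroup E] [NormedSpace ℝ E]
  [NormedAddCommGroup F] [NormedSpace ℝ F] {u : ℝ × E → F} {t : ℝ} {z : E}

theorem DifferentiableAt.deriv_comp_prodMk_left (hu : DifferentiableAt ℝ u (t, z)) :
    deriv (fun τ => u (τ, z)) t = fderiv ℝ u (t, z) (1, 0) :=
  (hu.hasFDerivAt.comp_hasDerivAt t ((hasDerivAt_id t).prodMk (hasDerivAt_const t z))).deriv

theorem DifferentiableAt.fderiv_comp_prodMk_right (hu : DifferentiableAt ℝ u (t, z)) (v : E) :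
    fderiv ℝ (fun y => u (t, y)) z v = fderiv ℝ u (t, z) (0, v) := by
  change fderiv ℝ (u ∘ Prod.mk t) z v = _
  rw [(hu.hasFDerivAt.comp z (hasFDerivAt_prodMk_right t z)).fderiv]
  rfl

end Product

section Increments

variable {E : Type*} [NormedAddCommGroup E] [NormedSpace ℝ E] {u : ℝ × E → ℝ} {M : ℝ}

theorem abs_image_add_fst_sub_sub_fderiv_le (hu : ContDiff ℝ 2 u)
    (hu₂ : ∀ p, ‖iteratedFDeriv ℝ 2 u p‖ ≤ M) (t s : ℝ) (z : E) :
    |u (t + s, z) - u (t, z) - s * fderiv ℝ u (t, z) (1, 0)| ≤ M * s ^ 2 := by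
  have key := norm_image_add_sub_sub_fderiv_le hu hu₂ (t, z) (s, 0)
  have hs : ((s, 0) : ℝ × E) = s • (1, 0) := by simp
  rwa [Prod.mk_add_mk, add_zero, Prod.norm_mk, norm_zero, max_eq_left (norm_nonneg s),
    Real.norm_eq_abs, Real.norm_eq_abs, sq_abs, hs, map_smul, smul_eq_mul] at key

theorem abs_image_add_snd_sub_sub_fderiv_le (hu : ContDiff ℝ 2 u)
    (hu₂ : ∀ p, ‖iteratedFDeriv ℝ 2 u p‖ ≤ M) (t : ℝ) (z w : E) :
    |u (t, z + w) - u (t, z) - fderiv ℝ u (t, z) (0, w)| ≤ M * ‖w‖ ^ 2 := by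
  have key := norm_image_add_sub_sub_fderiv_le hu hu₂ (t, z) (0, w)
  rwa [Prod.mk_add_mk, add_zero, Prod.norm_mk, norm_zero, max_eq_right (norm_nonneg w),
    Real.norm_eq_abs] at key

theorem abs_image_add_fst_sub_le (hu : ContDiff ℝ 2 u) (hu₁ : ∀ p, ‖iteratedFDeriv ℝ 1 u p‖ ≤ M)
    (t s : ℝ) (z : E) : |u (t + s, z) - u (t, z)| ≤ M * |s| := by
  have key := convex_univ.norm_image_sub_le_of_norm_fderiv_le
    (fun p _ => (hu.differentiable two_ne_zero).differentiableAt)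
    (fun p _ => (norm_iteratedFDeriv_one u).symm.trans_le (hu₁ p))
    (Set.mem_univ (t, z)) (Set.mem_univ (t + s, z))
  rwa [Prod.mk_sub_mk, add_sub_cancel_left, sub_self, Prod.norm_mk, norm_zero,
    max_eq_left (norm_nonneg s), Real.norm_eq_abs, Real.norm_eq_abs] at key

end Increments

theorem norm_le_one_of_sum_sq_eq_one {ι : Type*} [Fintype ι] {n : ι → ℝ}
    (hn : ∑ i, n i ^ 2 = 1) : ‖n‖ ≤ 1 := by
  refine (pi_norm_le_iff_of_nonneg zero_le_one).2 fun i => ?_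
  rw [Real.norm_eq_abs, ← sq_le_one_iff_abs_le_one, ← hn]
  exact Finset.single_le_sum (fun j _ => sq_nonneg (n j)) (Finset.mem_univ i)

theorem abs_boundary_step_defect_le {E : Type*} [NormedAddCommGroup E] [NormedSpace ℝ E]
    {u : ℝ × E → ℝ} {M μ γ c g ψ t r : ℝ} {z n : E} (hu : ContDiff ℝ 2 u)
    (hu₁ : ∀ p, ‖iteratedFDeriv ℝ 1 u p‖ ≤ M) (hu₂ : ∀ p, ‖iteratedFDeriv ℝ 2 u p‖ ≤ M)
    (hμ : 0 ≤ μ) (hμM : μ ≤ M) (hγ : |γ| ≤ M) (hc : |c| ≤ M) (hn : ‖n‖ ≤ 1) (hr : 0 ≤ r)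
    (hfirst : μ * fderiv ℝ u (t, z) (1, 0) + fderiv ℝ u (t, z) (0, n)
      + (γ + μ * c) * u (t, z) + μ * g = ψ) :
    |u (t + μ * r, z) * (1 + r * γ + r * μ * c) - r * ψ + r * μ * g - u (t, z - r • n)|
      ≤ (M ^ 3 + M + M ^ 2 * (M + M ^ 2)) * r ^ 2 := by
  set L := fderiv ℝ u (t, z)
  have hM : 0 ≤ M := hμ.trans hμM
  have htime := abs_image_add_fst_sub_sub_fderiv_le hu hu₂ t (μ * r) z
  have hspace := abs_image_add_snd_sub_sub_fderiv_le hu hu₂ t z (-(r • n))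
  have hlip := abs_image_add_fst_sub_le hu hu₁ t (μ * r) z
  rw [← sub_eq_add_neg] at hspace
  have hrn : ‖-(r • n)‖ ≤ r := by
    rw [norm_neg, norm_smul, Real.norm_of_nonneg hr]
    exact mul_le_of_le_one_right hr hn
  have hμr : |μ * r| ≤ M * r := by
    rw [abs_of_nonneg (mul_nonneg hμ hr)]
    exact mul_le_mul_of_nonneg_right hμM hr
  have hcoef : |γ + μ * c| ≤ M + M ^ 2 := by
    refine (abs_add_le _ _).trans (add_le_add hγ ?_)
    rw [abs_mul, abs_of_nonneg hμ, sq]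
    exact mul_le_mul hμM hc (abs_nonneg c) hM
  have hsplit : u (t + μ * r, z) * (1 + r * γ + r * μ * c) - r * ψ + r * μ * g
        - u (t, z - r • n)
      = (u (t + μ * r, z) - u (t, z) - μ * r * L (1, 0))
        - (u (t, z - r • n) - u (t, z) - L (0, -(r • n)))
        + r * (γ + μ * c) * (u (t + μ * r, z) - u (t, z)) := by
    have hL : L (0, -(r • n)) = -r * L (0, n) := by
      rw [← smul_eq_mul, ← map_smul, Prod.smul_mk, smul_zero, neg_smul]
    rw [hL, ← hfirst]
    ring
  calc _ = |(u (t + μ * r, z) - u (t, z) - μ * r * L (1, 0))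
        - (u (t, z - r • n) - u (t, z) - L (0, -(r • n)))
        + r * (γ + μ * c) * (u (t + μ * r, z) - u (t, z))| := by rw [hsplit]
    _ ≤ |u (t + μ * r, z) - u (t, z) - μ * r * L (1, 0)|
        + |u (t, z - r • n) - u (t, z) - L (0, -(r • n))|
        + r * |γ + μ * c| * |u (t + μ * r, z) - u (t, z)| := by
      refine (abs_add_le _ _).trans ?_
      rw [abs_mul, abs_mul, abs_of_nonneg hr]
      gcongr
      exact abs_sub _ _
    _ ≤ M * (μ * r) ^ 2 + M * ‖-(r • n)‖ ^ 2 + r * (M + M ^ 2) * (M * |μ * r|) := by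
      gcongr
    _ ≤ M * (M * r) ^ 2 + M * r ^ 2 + r * (M + M ^ 2) * (M * (M * r)) := by
      gcongr
    _ = (M ^ 3 + M + M ^ 2 * (M + M ^ 2)) * r ^ 2 := by ring

theorem projected_euler_boundary_one_step_general (d : ℕ) (M : ℝ) (hM : 0 < M) :
    ∃ C : ℝ, 0 < C ∧
      ∀ u : ℝ × (Fin d → ℝ) → ℝ, ContDiff ℝ 2 u →
      (∀ m : ℕ, m ≤ 2 → ∀ p : ℝ × (Fin d → ℝ), ‖iteratedFDeriv ℝ m u p‖ ≤ M) →
      ∀ A : Matrix (Fin d) (Fin d) ℝ, A.IsSymm → (∀ i j, |A i j| ≤ M) →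
      ∀ β : Fin d → ℝ, (∀ i, |β i| ≤ M) →
      ∀ μ : ℝ, 0 < μ → μ ≤ M →
      ∀ γ c g ψ : ℝ, |γ| ≤ M → |c| ≤ M → |g| ≤ M → |ψ| ≤ M →
      ∀ z n : Fin d → ℝ, (∑ i, (n i) ^ 2 = 1) →
      ∀ t : ℝ,
      -- the parabolic PDE holds at (t, z)
      (deriv (fun τ => u (τ, z)) t + stickyGen A β (fun y => u (t, y)) z
          + c * u (t, z) + g = 0) →
      -- the sticky (second-order) boundary relation holds at (t, z)
      (-μ * stickyGen A β (fun y => u (t, y)) z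
          + fderiv ℝ (fun y => u (t, y)) z n + γ * u (t, z) = ψ) →
      ∀ r : ℝ, 0 < r → r ≤ 1 →
      ∀ Yk Zk : ℝ, 0 < Yk →
      |u (t + μ * r, z) * (Yk * (1 + r * γ + r * μ * c))
          + (Zk - r * ψ * Yk + r * μ * g * Yk)
          - u (t, z - r • n) * Yk - Zk|
        ≤ C * r ^ 2 * Yk := by
  refine ⟨M ^ 3 + M + M ^ 2 * (M + M ^ 2), by positivity, ?_⟩
  intro u hu hub A _ _ β _ μ hμ hμM γ c g ψ hγ hc _ _ z n hn t hPDE hBC r hr _ Yk Zk hY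
  have hdiff : DifferentiableAt ℝ u (t, z) := (hu.differentiable two_ne_zero).differentiableAt
  have hfirst : μ * fderiv ℝ u (t, z) (1, 0) + fderiv ℝ u (t, z) (0, n)
      + (γ + μ * c) * u (t, z) + μ * g = ψ := by
    rw [hdiff.deriv_comp_prodMk_left] at hPDE
    rw [hdiff.fderiv_comp_prodMk_right] at hBC
    linear_combination μ * hPDE + hBC
  have hdefect := abs_boundary_step_defect_le hu (hub 1 one_le_two) (hub 2 le_rfl) hμ.le hμM
    hγ hc (norm_le_one_of_sum_sq_eq_one hn) hr.le hfirst
  rw [show ∀ U V : ℝ, U * (Yk * (1 + r * γ + r * μ * c)) + (Zk - r * ψ * Yk + r * μ * g * Yk)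
      - V * Yk - Zk = (U * (1 + r * γ + r * μ * c) - r * ψ + r * μ * g - V) * Yk
      from fun U V => by ring, abs_mul, abs_of_pos hY]
  exact mul_le_mul_of_nonneg_right hdefect hY.le

/-- Lemma 5.2: boundary one-step error estimate for the projected Euler method for
sticky diffusions.  The chain at `z - rn` (outside the domain, at distance `r` from
the boundary) is projected to the boundary point `z` along the inward unit normal `n`,
time advances by the sticky amount `μr`, and `Y`, `Z` receive boundary increments. -/
theorem projected_euler_boundary_one_step (d : ℕ) (hd : 1 ≤ d) (M : ℝ) (hM : 0 < M) :
    ∃ C : ℝ, 0 < C ∧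
      ∀ u : ℝ × (Fin d → ℝ) → ℝ, ContDiff ℝ 2 u →
      (∀ m : ℕ, m ≤ 2 → ∀ p : ℝ × (Fin d → ℝ), ‖iteratedFDeriv ℝ m u p‖ ≤ M) →
      ∀ A : Matrix (Fin d) (Fin d) ℝ, A.IsSymm → (∀ i j, |A i j| ≤ M) →
      ∀ β : Fin d → ℝ, (∀ i, |β i| ≤ M) →
      ∀ μ : ℝ, 0 < μ → μ ≤ M →
      ∀ γ c g ψ : ℝ, |γ| ≤ M → |c| ≤ M → |g| ≤ M → |ψ| ≤ M →
      ∀ z n : Fin d → ℝ, (∑ i, (n i) ^ 2 = 1) →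
      ∀ t : ℝ,
      -- the parabolic PDE holds at (t, z)
      (deriv (fun τ => u (τ, z)) t + stickyGen A β (fun y => u (t, y)) z
          + c * u (t, z) + g = 0) →
      -- the sticky (second-order) boundary relation holds at (t, z)
      (-μ * stickyGen A β (fun y => u (t, y)) z
          + fderiv ℝ (fun y => u (t, y)) z n + γ * u (t, z) = ψ) →
      ∀ r : ℝ, 0 < r → r ≤ 1 →
      ∀ Yk Zk : ℝ, 0 < Yk →
      |u (t + μ * r, z) * (Yk * (1 + r * γ + r * μ * c))
          + (Zk - r * ψ * Yk + r * μ * g * Yk)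
          - u (t, z - r • n) * Yk - Zk|
        ≤ C * r ^ 2 * Yk :=
  projected_euler_boundary_one_step_general d M hM
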